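/- arXiv:2007.01718 — 4 statements merged into one kernel-verified Lean document; each statement's English description precedes it below -/
import Mathlib

section
/- Let p = 10/3, r, λ > 0 and suppose there exists u ∈ H¹(ℝ³) with ∫u² = r and ∫|∇u|² + (q/4)∫φ_u u² − (3(p−2)/(2p)) λ ∫|u|^p = 0 and u ≠ 0. Then 5/(3λK) ≤ r^{2/3}, where K is the Gagliardo–Nirenberg constant for exponent 10/3. -/
open MeasureTheory

noncomputable section

abbrev E3 := EuclideanSpace ℝ (Fin 3)

/-- `∫ |∇u|²` -/
def gradInt (u : E3 → ℝ) : ℝ := ∫ x, ‖fderiv ℝ u x‖ ^ 2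

/-- The Coulomb potential `φ_u = |·|⁻¹ * u²`. -/
def phiFun (u : E3 → ℝ) (x : E3) : ℝ := ∫ y, (u y) ^ 2 / ‖x - y‖

/-- `∫ φ_u u²` -/
def phiInt (u : E3 → ℝ) : ℝ := ∫ x, phiFun u x * (u x) ^ 2

/-- `∫ |u|^p` -/
def pInt (p : ℝ) (u : E3 → ℝ) : ℝ := ∫ x, |u x| ^ p

/-- `∫ u²` -/
def massInt (u : E3 → ℝ) : ℝ := ∫ x, (u x) ^ 2

/-- Membership in `H¹(ℝ³)`. -/
def H1 (u : E3 → ℝ) : Prop :=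
  MemLp u 2 volume ∧ Differentiable ℝ u ∧ MemLp (fun x => ‖fderiv ℝ u x‖) 2 volume

/-!
The Nehari identity and `q ∫ φ_u u² ≥ 0` give `∫|∇u|² ≤ (3/5) λ ∫|u|^{10/3}`, and
Gagliardo–Nirenberg bounds the right side by `(3/5) λ K r^{2/3} ∫|∇u|²`; dividing by
`∫|∇u|² > 0` gives the claim. The gradient term is positive because a differentiable function
whose derivative vanishes a.e. is constant (by the fundamental theorem of calculus on a.e. line,
then by density and continuity), and the only constant in `L²(ℝ³)` is `0`.
-/

section Constancy

variable {E F : Type*} [NormedAddCommGroup E] [NormedSpace ℝ E] [FiniteDimensional ℝ E]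
  [MeasurableSpace E] [BorelSpace E] [NormedAddCommGroup F] [NormedSpace ℝ F] [CompleteSpace F]

theorem is_const_of_ae_deriv_eq_zero {f : ℝ → F} (hf : Differentiable ℝ f)
    (h : ∀ᵐ t, deriv f t = 0) (a b : ℝ) : f a = f b := by
  have hint : IntervalIntegrable (deriv f) volume a b :=
    ((integrable_zero ℝ F volume).congr (h.mono fun _ ht => ht.symm)).intervalIntegrable
  have hftc := intervalIntegral.integral_deriv_eq_sub (fun t _ => hf t) hint
  rw [intervalIntegral.integral_congr_ae (h.mono fun _ ht _ => ht),
    intervalIntegral.integral_zero] at hftc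
  exact (sub_eq_zero.mp hftc.symm).symm

theorem ae_ae_add_smul_mem (μ : Measure E) [μ.IsAddHaarMeasure] {s : Set E}
    (hs : MeasurableSet s) (h : ∀ᵐ x ∂μ, x ∈ s) (e : E) :
    ∀ᵐ x ∂μ, ∀ᵐ t : ℝ, x + t • e ∈ s := by
  have hmeas : MeasurableSet {z : E × ℝ | z.1 + z.2 • e ∈ s} := hs.preimage (by fun_prop)
  rw [Measure.ae_ae_comm (p := fun x (t : ℝ) => x + t • e ∈ s) hmeas]
  exact ae_of_all _ fun t => (measurePreserving_add_right μ (t • e)).quasiMeasurePreserving.ae h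

theorem is_const_of_ae_fderiv_eq_zero {μ : Measure E} [μ.IsAddHaarMeasure] {u : E → F}
    (hu : Differentiable ℝ u) (h : ∀ᵐ x ∂μ, fderiv ℝ u x = 0) (x y : E) : u x = u y := by
  have hline : ∀ᵐ z ∂μ, u (z + (x - y)) = u z := by
    filter_upwards [ae_ae_add_smul_mem μ (measurable_fderiv ℝ u (measurableSet_singleton 0)) h
      (x - y)] with z hz
    have hderiv (t : ℝ) :
        HasDerivAt (fun t : ℝ => u (z + t • (x - y)))
          (fderiv ℝ u (z + t • (x - y)) (x - y)) t :=
      (hu _).hasFDerivAt.comp_hasDerivAt t (((hasDerivAt_id t).smul_const (x - y)).const_add z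
        |>.congr_deriv (one_smul ℝ _))
    have hends := is_const_of_ae_deriv_eq_zero (fun t => (hderiv t).differentiableAt)
      (hz.mono fun t ht => by rw [(hderiv t).deriv, Set.mem_singleton_iff.mp ht]; rfl) 1 0
    simpa using hends
  have hext := (hu.continuous.comp (continuous_add_const (x - y))).ext_on
    (Measure.dense_of_ae hline) hu.continuous fun _ hz => hz
  simpa using congrFun hext y

end Constancy

theorem H1.eq_zero_of_gradInt_eq_zero {u : E3 → ℝ} (hu : H1 u) (h : gradInt u = 0) : u = 0 := by
  have hsq : (fun x => ‖fderiv ℝ u x‖ ^ 2) =ᵐ[volume] 0 :=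
    (integral_eq_zero_iff_of_nonneg (fun _ => by positivity) hu.2.2.integrable_sq).mp h
  have hfderiv : ∀ᵐ x : E3, fderiv ℝ u x = 0 := hsq.mono fun _ hx => by simpa using hx
  have hconst : u = fun _ => u 0 :=
    funext fun x => is_const_of_ae_fderiv_eq_zero hu.2.1 hfderiv x 0
  have hmem := hu.1
  rw [hconst, memLp_const_iff two_ne_zero ENNReal.ofNat_ne_top,
    measure_univ_of_isAddLeftInvariant] at hmem
  simp only [lt_self_iff_false, or_false] at hmem
  rw [hconst, hmem]
  rfl

theorem H1.gradInt_pos {u : E3 → ℝ} (hu : H1 u) (hne : u ≠ 0) : 0 < gradInt u :=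
  (integral_nonneg fun _ => sq_nonneg _).lt_of_ne fun h =>
    hne (hu.eq_zero_of_gradInt_eq_zero h.symm)

theorem phiInt_nonneg (u : E3 → ℝ) : 0 ≤ phiInt u :=
  integral_nonneg fun _ => mul_nonneg
    (integral_nonneg fun _ => div_nonneg (sq_nonneg _) (norm_nonneg _)) (sq_nonneg _)

theorem stmt7_general (q lam r K : ℝ) (hq : 0 < q) (hlam : 0 < lam) (hK : 0 < K)
    (hGN : ∀ v : E3 → ℝ, H1 v →
      pInt (10 / 3) v ≤ K * gradInt v * (massInt v) ^ ((2 : ℝ) / 3))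
    (u : E3 → ℝ) (hu : H1 u) (hne : u ≠ 0) (hmass : massInt u = r)
    (hNehari : gradInt u + (q / 4) * phiInt u
        - (3 * ((10 : ℝ) / 3 - 2) / (2 * (10 / 3))) * lam * pInt (10 / 3) u = 0) :
    5 / (3 * lam * K) ≤ r ^ ((2 : ℝ) / 3) := by
  have hgrad := hu.gradInt_pos hne
  have hgrad_le : gradInt u ≤ 3 / 5 * lam * pInt (10 / 3) u := by
    have hcoef : 3 * ((10 : ℝ) / 3 - 2) / (2 * (10 / 3)) = 3 / 5 := by norm_num
    have hphi := mul_nonneg hq.le (phiInt_nonneg u)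
    rw [hcoef] at hNehari
    linarith
  have key : gradInt u * 1 ≤ gradInt u * (3 / 5 * lam * K * r ^ ((2 : ℝ) / 3)) :=
    calc gradInt u * 1 ≤ 3 / 5 * lam * pInt (10 / 3) u := by rwa [mul_one]
      _ ≤ 3 / 5 * lam * (K * gradInt u * r ^ ((2 : ℝ) / 3)) := by
        gcongr
        exact hmass ▸ hGN u hu
      _ = gradInt u * (3 / 5 * lam * K * r ^ ((2 : ℝ) / 3)) := by ring
  have hbound := le_of_mul_le_mul_left key hgrad
  rw [div_le_iff₀ (by positivity)]
  linarith

/-- For `p = 10/3`: if there is a nonzero `u ∈ H¹(ℝ³)` in the Nehari-type set with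
`∫u² = r`, then `5/(3λK) ≤ r^(2/3)`, where `K` is the Gagliardo–Nirenberg constant at
`p = 10/3`. -/
theorem stmt7 (q lam r K : ℝ) (hq : 0 < q) (hlam : 0 < lam) (hr : 0 < r) (hK : 0 < K)
    (hGN : ∀ v : E3 → ℝ, H1 v →
      pInt (10 / 3) v ≤ K * gradInt v * (massInt v) ^ ((2 : ℝ) / 3))
    (u : E3 → ℝ) (hu : H1 u) (hne : u ≠ 0) (hmass : massInt u = r)
    (hNehari : gradInt u + (q / 4) * phiInt u
        - (3 * ((10 : ℝ) / 3 - 2) / (2 * (10 / 3))) * lam * pInt (10 / 3) u = 0) :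
    5 / (3 * lam * K) ≤ r ^ ((2 : ℝ) / 3) :=
  stmt7_general q lam r K hq hlam hK hGN u hu hne hmass hNehari

end
end

section
/- Let p ∈ (8/3, 10/3), p ≠ 3, q, λ > 0 and u with A = ∫|∇u|² > 0, C = λ∫|u|^p > 0. Then the system φ'_{r,u}(s) = 0, φ''_{r,u}(s) = 0 in the unknowns s, r > 0 has the unique solution s(u) = ((4p/(3(p−2)(3p−8))) r^{−(p−2)/2} A/C)^{2/(3p−10)} evaluated at r = r(u), where r(u) = (4(10−3p)/(3p−8))^{(3p−10)/(4(p−3))} (4p/(3(p−2)(3p−8)))^{1/(2(p−3))} R_p(u), and R_p(u) = (∫|∇u|²)^{(3p−8)/(4(p−3))}(q∫φ_u u²)^{(10−3p)/(4(p−3))}/(λ∫|u|^p)^{1/(2(p−3))}. -/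
/-!
Subtracting `2s/(3p−8)` times `φ''` from `φ'` kills the `s^{3p/2−4}` term and leaves
`r (rB/4 − (10−3p)/(3p−8) sA)`, so every positive solution has `s = c r` with
`c = (3p−8)B / (4(10−3p)A)`. Substituting into `φ'' = 0` gives
`c^{(3p−10)/2} r^{2(p−3)} = 4pA / (3(p−2)(3p−8)C)`, which has exactly one positive root
because `p ≠ 3`. The closed form of `r` is then a comparison of logarithms, and that of `s` is
`φ'' = 0` solved for `s`.
-/

open Real

noncomputable section

/-- `φ'_{r,u}(s)` for `φ_{r,u}(t) = (t²/2) r A + (t/4) r² B − (t^{3p/2−3}/p) r^{p/2} C`. -/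
def phiDeriv (p A B C r s : ℝ) : ℝ :=
  r * s * A + r ^ 2 / 4 * B - 3 * (p - 2) / (2 * p) * r ^ (p / 2) * s ^ (3 * p / 2 - 4) * C

/-- `φ''_{r,u}(s)`. -/
def phiDeriv2 (p A C r s : ℝ) : ℝ :=
  r * A - 3 * (p - 2) * (3 * p - 8) / (4 * p) * r ^ (p / 2) * s ^ (3 * p / 2 - 5) * C

/-- The ratio `s / r` at every solution. -/
def fiberingSlope (p A B : ℝ) : ℝ := B / (4 * (10 - 3 * p) / (3 * p - 8) * A)

def fiberingRadius (p A B C : ℝ) : ℝ :=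
  (4 * p / (3 * (p - 2) * (3 * p - 8)) * (A / C) / fiberingSlope p A B ^ ((3 * p - 10) / 2))
    ^ (2 * (p - 3))⁻¹

variable {p A B C r s : ℝ}

lemma fiberingSlope_pos (hp₁ : 8 / 3 < p) (hp₂ : p < 10 / 3) (hA : 0 < A) (hB : 0 < B) :
    0 < fiberingSlope p A B := by
  have : 0 < 10 - 3 * p := by linarith
  have : 0 < 3 * p - 8 := by linarith
  unfold fiberingSlope
  positivity

lemma fiberingRadius_pos (hp₁ : 8 / 3 < p) (hp₂ : p < 10 / 3) (hA : 0 < A) (hB : 0 < B)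
    (hC : 0 < C) : 0 < fiberingRadius p A B C := by
  have : 0 < p - 2 := by linarith
  have : 0 < 3 * p - 8 := by linarith
  have := fiberingSlope_pos hp₁ hp₂ hA hB
  unfold fiberingRadius
  positivity

lemma phiDeriv_sub_mul_phiDeriv2 (hp : 8 / 3 < p) (hs : 0 < s) :
    phiDeriv p A B C r s - 2 / (3 * p - 8) * s * phiDeriv2 p A C r s
      = r * (r * B / 4 - (10 - 3 * p) / (3 * p - 8) * s * A) := by
  have : p ≠ 0 := by linarith
  have : 3 * p - 8 ≠ 0 := by linarith
  unfold phiDeriv phiDeriv2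
  rw [show 3 * p / 2 - 4 = 3 * p / 2 - 5 + 1 by ring, rpow_add_one hs.ne']
  field_simp
  ring

lemma phiDeriv2_eq_zero_iff (hp : 8 / 3 < p) (hC : 0 < C) (hr : 0 < r) :
    phiDeriv2 p A C r s = 0 ↔
      s ^ ((3 * p - 10) / 2)
        = 4 * p / (3 * (p - 2) * (3 * p - 8)) * r ^ (-((p - 2) / 2)) * (A / C) := by
  have : 0 < p - 2 := by linarith
  have : 0 < 3 * p - 8 := by linarith
  have hrp : r ^ (p / 2) = r * r ^ ((p - 2) / 2) := by
    rw [← rpow_one_add' hr.le (by positivity)]; ring_nf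
  unfold phiDeriv2
  rw [hrp, rpow_neg hr.le, show 3 * p / 2 - 5 = (3 * p - 10) / 2 by ring, sub_eq_zero]
  have : 0 < r ^ ((p - 2) / 2) := by positivity
  field_simp
  exact eq_comm

lemma phiDeriv_eq_zero_iff (hp₁ : 8 / 3 < p) (hp₂ : p < 10 / 3) (hA : 0 < A) (hr : 0 < r)
    (hs : 0 < s) (h₂ : phiDeriv2 p A C r s = 0) :
    phiDeriv p A B C r s = 0 ↔ s = fiberingSlope p A B * r := by
  have : 0 < 10 - 3 * p := by linarith
  have : 0 < 3 * p - 8 := by linarith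
  have h := phiDeriv_sub_mul_phiDeriv2 (A := A) (B := B) (C := C) (r := r) hp₁ hs
  rw [h₂, mul_zero, sub_zero] at h
  rw [h, mul_eq_zero, or_iff_right hr.ne', fiberingSlope]
  field_simp
  rw [mul_zero, sub_eq_zero, eq_comm]

lemma fiberingSlope_mul_rpow_eq_iff (hp₁ : 8 / 3 < p) (hp₂ : p < 10 / 3) (hp₃ : p ≠ 3)
    (hA : 0 < A) (hB : 0 < B) (hC : 0 < C) (hr : 0 < r) :
    (fiberingSlope p A B * r) ^ ((3 * p - 10) / 2)
        = 4 * p / (3 * (p - 2) * (3 * p - 8)) * r ^ (-((p - 2) / 2)) * (A / C) ↔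
      r = fiberingRadius p A B C := by
  have : 0 < p - 2 := by linarith
  have : 0 < 3 * p - 8 := by linarith
  have hc := fiberingSlope_pos hp₁ hp₂ hA hB
  have hr' : r ^ (2 * (p - 3)) = r ^ ((3 * p - 10) / 2) * r ^ ((p - 2) / 2) := by
    rw [← rpow_add hr]; ring_nf
  rw [fiberingRadius, eq_rpow_inv hr.le (by positivity) (by intro h; apply hp₃; linarith), hr',
    mul_rpow hc.le hr.le, rpow_neg hr.le]
  have : 0 < r ^ ((p - 2) / 2) := by positivity
  have : 0 < fiberingSlope p A B ^ ((3 * p - 10) / 2) := by positivity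
  field_simp

lemma phiDeriv_eq_zero_and_phiDeriv2_eq_zero_iff (hp₁ : 8 / 3 < p) (hp₂ : p < 10 / 3)
    (hp₃ : p ≠ 3) (hA : 0 < A) (hB : 0 < B) (hC : 0 < C) (hr : 0 < r) (hs : 0 < s) :
    phiDeriv p A B C r s = 0 ∧ phiDeriv2 p A C r s = 0 ↔
      s = fiberingSlope p A B * r ∧ r = fiberingRadius p A B C := by
  constructor
  · rintro ⟨h₁, h₂⟩
    have hsr := (phiDeriv_eq_zero_iff hp₁ hp₂ hA hr hs h₂).1 h₁
    refine ⟨hsr, (fiberingSlope_mul_rpow_eq_iff hp₁ hp₂ hp₃ hA hB hC hr).1 ?_⟩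
    rw [← hsr]
    exact (phiDeriv2_eq_zero_iff hp₁ hC hr).1 h₂
  · rintro ⟨hsr, hrR⟩
    have h₂ : phiDeriv2 p A C r s = 0 := by
      rw [phiDeriv2_eq_zero_iff hp₁ hC hr, hsr]
      exact (fiberingSlope_mul_rpow_eq_iff hp₁ hp₂ hp₃ hA hB hC hr).2 hrR
    exact ⟨(phiDeriv_eq_zero_iff hp₁ hp₂ hA hr hs h₂).2 hsr, h₂⟩

lemma fiberingRadius_eq (hp₁ : 8 / 3 < p) (hp₂ : p < 10 / 3) (hp₃ : p ≠ 3) (hA : 0 < A)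
    (hB : 0 < B) (hC : 0 < C) :
    fiberingRadius p A B C
      = (4 * (10 - 3 * p) / (3 * p - 8)) ^ ((3 * p - 10) / (4 * (p - 3)))
          * (4 * p / (3 * (p - 2) * (3 * p - 8))) ^ (1 / (2 * (p - 3)))
          * (A ^ ((3 * p - 8) / (4 * (p - 3))) * B ^ ((10 - 3 * p) / (4 * (p - 3)))
              / C ^ (1 / (2 * (p - 3)))) := by
  have : 0 < p - 2 := by linarith
  have : 0 < 10 - 3 * p := by linarith
  have : 0 < 3 * p - 8 := by linarith
  have : p - 3 ≠ 0 := sub_ne_zero.2 hp₃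
  apply log_injOn_pos (Set.mem_Ioi.2 (fiberingRadius_pos hp₁ hp₂ hA hB hC))
    (Set.mem_Ioi.2 (by positivity))
  unfold fiberingRadius fiberingSlope
  simp (disch := positivity) only [log_mul, log_div, log_rpow]
  field_simp
  ring

end

/-- For `p ∈ (8/3, 10/3)`, `p ≠ 3`, the system `φ'_{r,u}(s) = φ''_{r,u}(s) = 0`
(with `A = ∫|∇u|²`, `B = q∫φ_u u²`, `C = λ∫|u|^p`) has a unique positive solution
`(s(u), r(u))`, with `r(u)` given in terms of the nonlinear Rayleigh quotient
`R_p(u) = A^((3p-8)/(4(p-3))) B^((10-3p)/(4(p-3))) / C^(1/(2(p-3)))` and `s(u)` given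
by the explicit formula evaluated at `r = r(u)`. -/
theorem stmt15 (p A B C : ℝ) (hp1 : 8 / 3 < p) (hp2 : p < 10 / 3) (hp3 : p ≠ 3)
    (hA : 0 < A) (hB : 0 < B) (hC : 0 < C) :
    ∃ s r : ℝ, 0 < s ∧ 0 < r ∧
      r * s * A + r ^ 2 / 4 * B
        - 3 * (p - 2) / (2 * p) * r ^ (p / 2) * s ^ (3 * p / 2 - 4) * C = 0 ∧
      r * A - 3 * (p - 2) * (3 * p - 8) / (4 * p) * r ^ (p / 2) * s ^ (3 * p / 2 - 5) * C = 0 ∧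
      r = (4 * (10 - 3 * p) / (3 * p - 8)) ^ ((3 * p - 10) / (4 * (p - 3)))
          * (4 * p / (3 * (p - 2) * (3 * p - 8))) ^ (1 / (2 * (p - 3)))
          * (A ^ ((3 * p - 8) / (4 * (p - 3))) * B ^ ((10 - 3 * p) / (4 * (p - 3)))
              / C ^ (1 / (2 * (p - 3)))) ∧
      s = (4 * p / (3 * (p - 2) * (3 * p - 8)) * r ^ (-((p - 2) / 2)) * (A / C))
            ^ (2 / (3 * p - 10)) ∧
      ∀ s' r' : ℝ, 0 < s' → 0 < r' →
        r' * s' * A + r' ^ 2 / 4 * B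
          - 3 * (p - 2) / (2 * p) * r' ^ (p / 2) * s' ^ (3 * p / 2 - 4) * C = 0 →
        r' * A - 3 * (p - 2) * (3 * p - 8) / (4 * p) * r' ^ (p / 2) * s' ^ (3 * p / 2 - 5) * C
            = 0 →
        s' = s ∧ r' = r := by
  set r := fiberingRadius p A B C
  set s := fiberingSlope p A B * r
  have hr : 0 < r := fiberingRadius_pos hp1 hp2 hA hB hC
  have hs : 0 < s := mul_pos (fiberingSlope_pos hp1 hp2 hA hB) hr
  obtain ⟨h₁, h₂⟩ :=
    (phiDeriv_eq_zero_and_phiDeriv2_eq_zero_iff hp1 hp2 hp3 hA hB hC hr hs).2 ⟨rfl, rfl⟩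
  refine ⟨s, r, hs, hr, h₁, h₂, fiberingRadius_eq hp1 hp2 hp3 hA hB hC, ?_, ?_⟩
  · rw [← inv_div (3 * p - 10) 2, ← (phiDeriv2_eq_zero_iff hp1 hC hr).1 h₂,
      rpow_rpow_inv hs.le (by intro h; linarith)]
  · intro s' r' hs' hr' h₁' h₂'
    obtain ⟨hsr', hr'R⟩ :=
      (phiDeriv_eq_zero_and_phiDeriv2_eq_zero_iff hp1 hp2 hp3 hA hB hC hr' hs').1 ⟨h₁', h₂'⟩
    exact ⟨by rw [hsr', hr'R], hr'R⟩
end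

section
/- Let p ∈ (3, 10/3) and suppose A = ∫|∇u|², B = q∫φ_u u², C = λ∫|u|^p are positive, r > 0, t > 0 satisfy rtA + (r²/4)B − (3(p−2)/(2p)) r^{p/2} t^{3p/2−4} C = 0 and rA − (3(p−2)(3p−8)/(4p)) r^{p/2} t^{3p/2−5} C > 0. Then tA + (r/2)B − (3(p−2)/4) t^{3p/2−4} r^{p/2−1} C < 0. -/
/-! Write `D = r^(p/2) t^(3p/2-5) C`. Eliminating `B` with the constraint turns `r` times the
target into `-r t A + 3(p-2)(4-p)/(4p) · t D`, and the second-order condition bounds `r t A`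
from below by `3(p-2)(3p-8)/(4p) · t D`; what remains is `3(p-2)(3-p)/p · t D < 0`. -/

lemma nehari_deriv_neg_of_second_order_pos {p A B D r t : ℝ} (hp : 3 < p) (ht : 0 < t)
    (hD : 0 < D)
    (h1 : r * t * A + r ^ 2 / 4 * B - 3 * (p - 2) / (2 * p) * (t * D) = 0)
    (h2 : 0 < r * A - 3 * (p - 2) * (3 * p - 8) / (4 * p) * D) :
    r * t * A + r ^ 2 / 2 * B - 3 * (p - 2) / 4 * (t * D) < 0 := by
  have hp0 : p ≠ 0 := by positivity
  have h_elim : r * t * A + r ^ 2 / 2 * B - 3 * (p - 2) / 4 * (t * D)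
      = 2 * (r * t * A + r ^ 2 / 4 * B - 3 * (p - 2) / (2 * p) * (t * D))
        - t * (r * A - 3 * (p - 2) * (3 * p - 8) / (4 * p) * D)
        - 3 * (p - 2) * (p - 3) / p * (t * D) := by
    field_simp
    ring
  have h_rem : 0 < 3 * (p - 2) * (p - 3) / p * (t * D) := by
    have : 0 < p - 3 := by linarith
    have : 0 < p - 2 := by linarith
    positivity
  rw [h_elim, h1]
  linarith [mul_pos ht h2]

theorem stmt16_general (p A B C r t : ℝ) (hp1 : 3 < p)
    (hC : 0 < C) (hr : 0 < r) (ht : 0 < t)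
    (h1 : r * t * A + r ^ 2 / 4 * B
        - 3 * (p - 2) / (2 * p) * r ^ (p / 2) * t ^ (3 * p / 2 - 4) * C = 0)
    (h2 : 0 < r * A - 3 * (p - 2) * (3 * p - 8) / (4 * p) * r ^ (p / 2) * t ^ (3 * p / 2 - 5) * C) :
    t * A + r / 2 * B - 3 * (p - 2) / 4 * t ^ (3 * p / 2 - 4) * r ^ (p / 2 - 1) * C < 0 := by
  have ht_pow : t ^ (3 * p / 2 - 4) = t ^ (3 * p / 2 - 5) * t := by
    rw [← Real.rpow_add_one ht.ne']
    ring_nf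
  have hr_pow : r ^ (p / 2) = r ^ (p / 2 - 1) * r := by
    rw [← Real.rpow_add_one hr.ne']
    ring_nf
  have h_scaled := nehari_deriv_neg_of_second_order_pos (A := A) (B := B) (r := r) hp1 ht
    (by positivity : 0 < r ^ (p / 2) * t ^ (3 * p / 2 - 5) * C)
    (by rw [← h1, ht_pow]; ring) (by convert h2 using 2; ring)
  refine neg_of_mul_neg_right (a := r) (lt_of_eq_of_lt ?_ h_scaled) hr.le
  rw [hr_pow, ht_pow]
  ring

/-- Lemma "I1": for `p ∈ (3, 10/3)`, if `A, B, C > 0` and `r, t > 0` satisfy the Nehari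
constraint and the second-order condition, then
`tA + (r/2)B − (3(p−2)/4) t^(3p/2−4) r^(p/2−1) C < 0`. -/
theorem stmt16 (p A B C r t : ℝ) (hp1 : 3 < p) (hp2 : p < 10 / 3)
    (hA : 0 < A) (hB : 0 < B) (hC : 0 < C) (hr : 0 < r) (ht : 0 < t)
    (h1 : r * t * A + r ^ 2 / 4 * B
        - 3 * (p - 2) / (2 * p) * r ^ (p / 2) * t ^ (3 * p / 2 - 4) * C = 0)
    (h2 : 0 < r * A - 3 * (p - 2) * (3 * p - 8) / (4 * p) * r ^ (p / 2) * t ^ (3 * p / 2 - 5) * C) :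
    t * A + r / 2 * B - 3 * (p - 2) / 4 * t ^ (3 * p / 2 - 4) * r ^ (p / 2 - 1) * C < 0 :=
  stmt16_general p A B C r t hp1 hC hr ht h1 h2
end

section
/- Let p ∈ (3, 10/3) and A, B, C > 0, r > 0, t > 0 satisfy rtA + (r²/4)B − (3(p−2)/(2p)) r^{p/2} t^{3p/2−4} C = 0 and rA − (3(p−2)(3p−8)/(4p)) r^{p/2} t^{3p/2−5} C > 0. Then t²A + rtB − r^{p/2−1} t^{3p/2−3} C < ((−27p² + 146p − 192)/(4p)) r^{p/2−1} t^{3p/2−3} C. In particular, if p ≥ (73+√145)/27 then t²A + rtB − r^{p/2−1} t^{3p/2−3} C < 0. -/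
/-!
Write `K = r^(p/2-1) t^(3p/2-3) C`; the other two powers are `K` times `r/t` and `r/t²`.
Multiplying the first condition by `4t/r` expresses `rtB` through `t²A` and `K`, which turns the
quantity into `-3t²A + ((5p-12)/p) K`. Multiplying the second
condition by `t²/r` gives `t²A > (3(p-2)(3p-8)/(4p)) K`, and substituting this bound yields the
coefficient `(-27p² + 146p - 192)/(4p)`, whose numerator has the roots `(73 ± √145)/27`.
-/

open Real

section

variable {p A B C r t m c : ℝ}

lemma rpow_half_mul_rpow_sub_four (hr : 0 < r) (ht : 0 < t) :
    r ^ (p / 2) * t ^ (3 * p / 2 - 4) = r / t * (r ^ (p / 2 - 1) * t ^ (3 * p / 2 - 3)) := by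
  rw [rpow_sub_one hr.ne', show 3 * p / 2 - 4 = 3 * p / 2 - 3 - 1 by ring,
    rpow_sub_one ht.ne']
  field_simp

lemma rpow_half_mul_rpow_sub_five (hr : 0 < r) (ht : 0 < t) :
    r ^ (p / 2) * t ^ (3 * p / 2 - 5) = r / t ^ 2 * (r ^ (p / 2 - 1) * t ^ (3 * p / 2 - 3)) := by
  rw [rpow_sub_one hr.ne', show 3 * p / 2 - 5 = 3 * p / 2 - 3 - 2 by ring,
    rpow_sub ht, rpow_two]
  field_simp

lemma energy_eq_of_nehari (hp : p ≠ 0) (hr : r ≠ 0) (ht : t ≠ 0)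
    (h1 : r * t * A + r ^ 2 / 4 * B - 3 * (p - 2) / (2 * p) * (r / t * m) * C = 0) :
    t ^ 2 * A + r * t * B - m * C = -3 * t ^ 2 * A + (5 * p - 12) / p * (m * C) := by
  have hrtB : r * t * B = -4 * t ^ 2 * A + 6 * (p - 2) / p * (m * C) := by
    linear_combination (norm := (field_simp; ring)) (4 * t / r) * h1
  rw [hrtB]
  field_simp
  ring

lemma lt_of_second_order (hr : 0 < r) (ht : t ≠ 0)
    (h2 : 0 < r * A - c * (r / t ^ 2 * m) * C) : c * (m * C) < t ^ 2 * A := by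
  have h := mul_pos (div_pos (sq_pos_of_ne_zero ht) hr) h2
  have h' : t ^ 2 / r * (r * A - c * (r / t ^ 2 * m) * C) = t ^ 2 * A - c * (m * C) := by
    field_simp
  linarith

end

lemma quadratic_nonpos_of_root_le {p : ℝ} (hp : (73 + √145) / 27 ≤ p) :
    -27 * p ^ 2 + 146 * p - 192 ≤ 0 := by
  have hsqrt : √145 ≤ 27 * p - 73 := by linarith
  have h145 : (145 : ℝ) ≤ (27 * p - 73) ^ 2 := by
    calc (145 : ℝ) = √145 ^ 2 := (sq_sqrt (by norm_num)).symm
      _ ≤ (27 * p - 73) ^ 2 := pow_le_pow_left₀ (sqrt_nonneg _) hsqrt 2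
  nlinarith

theorem stmt18_general (p A B C r t : ℝ) (hp1 : 3 < p)
    (hC : 0 < C) (hr : 0 < r) (ht : 0 < t)
    (h1 : r * t * A + r ^ 2 / 4 * B
        - 3 * (p - 2) / (2 * p) * r ^ (p / 2) * t ^ (3 * p / 2 - 4) * C = 0)
    (h2 : 0 < r * A - 3 * (p - 2) * (3 * p - 8) / (4 * p) * r ^ (p / 2) * t ^ (3 * p / 2 - 5) * C) :
    t ^ 2 * A + r * t * B - r ^ (p / 2 - 1) * t ^ (3 * p / 2 - 3) * C <
      (-27 * p ^ 2 + 146 * p - 192) / (4 * p) * r ^ (p / 2 - 1) * t ^ (3 * p / 2 - 3) * C ∧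
    ((73 + Real.sqrt 145) / 27 ≤ p →
      t ^ 2 * A + r * t * B - r ^ (p / 2 - 1) * t ^ (3 * p / 2 - 3) * C < 0) := by
  have hp : 0 < p := by linarith
  rw [mul_assoc _ (r ^ (p / 2)), rpow_half_mul_rpow_sub_four hr ht] at h1
  rw [mul_assoc _ (r ^ (p / 2)), rpow_half_mul_rpow_sub_five hr ht] at h2
  simp only [mul_assoc _ (r ^ (p / 2 - 1))]
  set m := r ^ (p / 2 - 1) * t ^ (3 * p / 2 - 3)
  have hmC : 0 < m * C := by positivity
  have hlt : t ^ 2 * A + r * t * B - m * C < (-27 * p ^ 2 + 146 * p - 192) / (4 * p) * m * C := by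
    rw [energy_eq_of_nehari hp.ne' hr.ne' ht.ne' h1]
    have h := lt_of_second_order hr ht.ne' h2
    field_simp at h ⊢
    linarith
  refine ⟨hlt, fun hp' => hlt.trans_le ?_⟩
  rw [mul_assoc]
  exact mul_nonpos_of_nonpos_of_nonneg
    (div_nonpos_of_nonpos_of_nonneg (quadratic_nonpos_of_root_le hp') (by positivity)) hmC.le

/-- Lemma "I2" (algebraic core): for `p ∈ (3, 10/3)`, under the Nehari constraint and the
second-order condition, `t²A + rtB − r^(p/2−1) t^(3p/2−3) C` is bounded above by
`((−27p² + 146p − 192)/(4p)) r^(p/2−1) t^(3p/2−3) C`; in particular it is negative when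
`p ≥ (73 + √145)/27`. -/
theorem stmt18 (p A B C r t : ℝ) (hp1 : 3 < p) (hp2 : p < 10 / 3)
    (hA : 0 < A) (hB : 0 < B) (hC : 0 < C) (hr : 0 < r) (ht : 0 < t)
    (h1 : r * t * A + r ^ 2 / 4 * B
        - 3 * (p - 2) / (2 * p) * r ^ (p / 2) * t ^ (3 * p / 2 - 4) * C = 0)
    (h2 : 0 < r * A - 3 * (p - 2) * (3 * p - 8) / (4 * p) * r ^ (p / 2) * t ^ (3 * p / 2 - 5) * C) :
    t ^ 2 * A + r * t * B - r ^ (p / 2 - 1) * t ^ (3 * p / 2 - 3) * C <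
      (-27 * p ^ 2 + 146 * p - 192) / (4 * p) * r ^ (p / 2 - 1) * t ^ (3 * p / 2 - 3) * C ∧
    ((73 + Real.sqrt 145) / 27 ≤ p →
      t ^ 2 * A + r * t * B - r ^ (p / 2 - 1) * t ^ (3 * p / 2 - 3) * C < 0) :=
  stmt18_general p A B C r t hp1 hC hr ht h1 h2
end
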